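/- The canonical functor Γ : C → C_ex, defined on objects by ΓX = (X, I_X) for a chosen weak comma object I_X of (1_X, 1_X), and on morphisms by Γf = [f], is a well-defined Pos-enriched functor which is fully order-faithful: f ≤ g in C if and only if Γf ≤ Γg in C_ex; moreover Γ is essentially independent of the choice of weak comma objects. -/

import Mathlib

/-!
Since `i₀ ≤ i₁`, factoring a pair `(f, g)` through the weak comma object `I_Y` is the same
as `f ≤ g`; so the order on `C_ex(ΓX, ΓY)` is just the order of `C(X, Y)` and Γ is fully
order-faithful. Any two weak comma objects of `(1_X, 1_X)` factor through each other, which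
makes `[1_X]` an isomorphism between the two resulting objects `(X, I_X)` and `(X, I'_X)`.
-/

open CategoryTheory

universe w v u v' u' v'' u''

/-- A `Pos`-enriched category: each hom-set carries a partial order and
composition is monotone in both variables. -/
class PosEnriched (C : Type u) [Category.{v} C] where
  homOrder : ∀ X Y : C, PartialOrder (X ⟶ Y)
  comp_mono : ∀ {X Y Z : C} {f f' : X ⟶ Y} {g g' : Y ⟶ Z},
    (homOrder X Y).le f f' → (homOrder Y Z).le g g' → (homOrder X Z).le (f ≫ g) (f' ≫ g')

attribute [instance] PosEnriched.homOrder

namespace PosEnr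

variable {C : Type u} [Category.{v} C] [PosEnriched C]

theorem comp_mono' {X Y Z : C} {f f' : X ⟶ Y} {g g' : Y ⟶ Z} (h : f ≤ f') (h' : g ≤ g') :
    f ≫ g ≤ f' ≫ g' := PosEnriched.comp_mono h h'

/-- `m` is an order-monomorphism (ff-morphism): postcomposition reflects the order
(hence, by antisymmetry, is also injective). -/
def OrderMono {X Y : C} (m : X ⟶ Y) : Prop :=
  ∀ {Z : C} (u v : Z ⟶ X), u ≫ m ≤ v ≫ m → u ≤ v

/-- `e` is an so-morphism: it is left orthogonal, in the `Pos`-enriched sense, to all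
order-monomorphisms (the relevant square of hom-posets is a pullback in `Pos`). -/
def IsSo {A B : C} (e : A ⟶ B) : Prop :=
  ∀ {X Y : C} (m : X ⟶ Y), OrderMono m →
    (∀ (f : A ⟶ X) (g : B ⟶ Y), f ≫ m = e ≫ g → ∃ h : B ⟶ X, e ≫ h = f ∧ h ≫ m = g) ∧
    (∀ h h' : B ⟶ X, e ≫ h ≤ e ≫ h' → h ≫ m ≤ h' ≫ m → h ≤ h')

/-- `e : I ⟶ X` is the (conical, `Pos`-enriched) inserter of the ordered pair `(f, g)`. -/
def IsInserterP {X Y I : C} (f g : X ⟶ Y) (e : I ⟶ X) : Prop :=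
  e ≫ f ≤ e ≫ g ∧
  (∀ {Z : C} (h : Z ⟶ X), h ≫ f ≤ h ≫ g → ∃ u : Z ⟶ I, u ≫ e = h) ∧
  OrderMono e

/-- A weak inserter: only the existence part of the universal property. -/
def IsWeakInserter {X Y I : C} (f g : X ⟶ Y) (e : I ⟶ X) : Prop :=
  e ≫ f ≤ e ≫ g ∧
  (∀ {Z : C} (h : Z ⟶ X), h ≫ f ≤ h ≫ g → ∃ u : Z ⟶ I, u ≫ e = h)

/-- `q : Y ⟶ Q` is the coinserter of the ordered pair `(u, v)`. -/
def IsCoinserterP {X Y Q : C} (u v : X ⟶ Y) (q : Y ⟶ Q) : Prop :=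
  u ≫ q ≤ v ≫ q ∧
  (∀ {Z : C} (h : Y ⟶ Z), u ≫ h ≤ v ≫ h → ∃ t : Q ⟶ Z, q ≫ t = h) ∧
  (∀ {Z : C} (h h' : Q ⟶ Z), q ≫ h ≤ q ≫ h' → h ≤ h')

/-- `(c0, c1)` is the comma object (lax pullback) of the ordered pair `(f, g)`. -/
def IsCommaP {X Y Z P : C} (f : X ⟶ Z) (g : Y ⟶ Z) (c0 : P ⟶ X) (c1 : P ⟶ Y) : Prop :=
  c0 ≫ f ≤ c1 ≫ g ∧
  (∀ {A : C} (u0 : A ⟶ X) (u1 : A ⟶ Y), u0 ≫ f ≤ u1 ≫ g →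
      ∃ w : A ⟶ P, w ≫ c0 = u0 ∧ w ≫ c1 = u1) ∧
  (∀ {A : C} (w w' : A ⟶ P), w ≫ c0 ≤ w' ≫ c0 → w ≫ c1 ≤ w' ≫ c1 → w ≤ w')

/-- An effective epimorphism: a coinserter of some pair. -/
def EffectiveEpiP {Y Q : C} (q : Y ⟶ Q) : Prop :=
  ∃ (X : C) (u v : X ⟶ Y), IsCoinserterP u v q

/-- Binary product in the `Pos`-enriched (conical) sense. -/
def IsBinProdP {X Y P : C} (p : P ⟶ X) (q : P ⟶ Y) : Prop :=
  (∀ {Z : C} (f : Z ⟶ X) (g : Z ⟶ Y), ∃ h : Z ⟶ P, h ≫ p = f ∧ h ≫ q = g) ∧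
  (∀ {Z : C} (h h' : Z ⟶ P), h ≫ p ≤ h' ≫ p → h ≫ q ≤ h' ≫ q → h ≤ h')

/-- Terminal object in the `Pos`-enriched sense. -/
def IsTerminalP (T : C) : Prop :=
  ∀ X : C, ∃ f : X ⟶ T, ∀ g : X ⟶ T, g = f

/-- Product of a (possibly infinite) family in the `Pos`-enriched sense. -/
def IsProdFamP {ι : Type w} (X : ι → C) (P : C) (p : ∀ i, P ⟶ X i) : Prop :=
  (∀ {Z : C} (f : ∀ i, Z ⟶ X i), ∃ h : Z ⟶ P, ∀ i, h ≫ p i = f i) ∧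
  (∀ {Z : C} (h h' : Z ⟶ P), (∀ i, h ≫ p i ≤ h' ≫ p i) → h ≤ h')

/-- Weak product of a family: only the existence part. -/
def IsWeakProdFam {ι : Type w} (X : ι → C) (P : C) (p : ∀ i, P ⟶ X i) : Prop :=
  ∀ {Z : C} (f : ∀ i, Z ⟶ X i), ∃ h : Z ⟶ P, ∀ i, h ≫ p i = f i

/-- Pullback in the `Pos`-enriched (conical) sense. -/
def IsPullbackP {X Y Z P : C} (f : X ⟶ Z) (g : Y ⟶ Z) (p0 : P ⟶ X) (p1 : P ⟶ Y) : Prop :=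
  p0 ≫ f = p1 ≫ g ∧
  (∀ {A : C} (u0 : A ⟶ X) (u1 : A ⟶ Y), u0 ≫ f = u1 ≫ g →
      ∃ w : A ⟶ P, w ≫ p0 = u0 ∧ w ≫ p1 = u1) ∧
  (∀ {A : C} (w w' : A ⟶ P), w ≫ p0 ≤ w' ≫ p0 → w ≫ p1 ≤ w' ≫ p1 → w ≤ w')

/-- A congruence, given by a jointly order-monic pair which is order-reflexive and
transitive (in terms of generalized elements). -/
def IsCongPair {S X : C} (s0 s1 : S ⟶ X) : Prop :=
  (∀ {A : C} (u v : A ⟶ S), u ≫ s0 ≤ v ≫ s0 → u ≫ s1 ≤ v ≫ s1 → u ≤ v) ∧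
  (∀ {A : C} (a0 a1 : A ⟶ X), a0 ≤ a1 → ∃ u : A ⟶ S, u ≫ s0 = a0 ∧ u ≫ s1 = a1) ∧
  (∀ {A : C} (u v : A ⟶ S), u ≫ s1 = v ≫ s0 →
      ∃ t : A ⟶ S, t ≫ s0 = u ≫ s0 ∧ t ≫ s1 = v ≫ s1)

/-- An so-projective object: its covariant hom-functor to `Pos` preserves so-morphisms
(equivalently, sends them to surjections). -/
def SoProjective (P : C) : Prop :=
  ∀ {A B : C} (e : A ⟶ B), IsSo e → ∀ f : P ⟶ B, ∃ g : P ⟶ A, g ≫ e = f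

end PosEnr

/-- A weight `W : D ⥤ Pos` for `Pos`-enriched weighted limits, given concretely. -/
structure PosWeight (D : Type u') [Category.{v'} D] [PosEnriched D] where
  obj : D → Type
  po : ∀ d, PartialOrder (obj d)
  map : ∀ {d d' : D}, (d ⟶ d') → obj d → obj d'
  map_monotone : ∀ {d d' : D} (f : d ⟶ d') (x y : obj d),
    (po d).le x y → (po d').le (map f x) (map f y)
  map_id : ∀ (d : D) (x : obj d), map (𝟙 d) x = x
  map_comp : ∀ {d d' d'' : D} (f : d ⟶ d') (g : d' ⟶ d'') (x : obj d),
    map (f ≫ g) x = map g (map f x)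
  map_le : ∀ {d d' : D} {f g : d ⟶ d'}, f ≤ g → ∀ x : obj d, (po d').le (map f x) (map g x)

attribute [instance] PosWeight.po

/-- A finite weight: finitely many objects, finite hom-posets, finite values. -/
def PosWeight.IsFiniteWeight {D : Type u'} [Category.{v'} D] [PosEnriched D]
    (W : PosWeight D) : Prop :=
  Finite D ∧ (∀ d d' : D, Finite (d ⟶ d')) ∧ ∀ d, Finite (W.obj d)

/-- A `Pos`-enriched (locally monotone) functor. -/
structure PosFunctor (C : Type u) (E : Type u') [Category.{v} C] [Category.{v'} E]
    [PosEnriched C] [PosEnriched E] where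
  toFunctor : C ⥤ E
  map_le : ∀ {X Y : C} {f g : X ⟶ Y}, f ≤ g → toFunctor.map f ≤ toFunctor.map g

/-- Composition of `Pos`-enriched functors. -/
def PosFunctor.comp {D : Type u''} {C : Type u} {E : Type u'}
    [Category.{v''} D] [Category.{v} C] [Category.{v'} E]
    [PosEnriched D] [PosEnriched C] [PosEnriched E]
    (G : PosFunctor D C) (F : PosFunctor C E) : PosFunctor D E where
  toFunctor := G.toFunctor ⋙ F.toFunctor
  map_le h := F.map_le (G.map_le h)

/-- A cylinder (`Pos`-natural transformation) `W ⟶ C(L, F-)`. -/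
structure Cylinder {D : Type u'} [Category.{v'} D] [PosEnriched D] (W : PosWeight D)
    {E : Type u} [Category.{v} E] [PosEnriched E] (F : PosFunctor D E) (L : E) where
  app : ∀ d : D, W.obj d → (L ⟶ F.toFunctor.obj d)
  monotone : ∀ (d : D) (x y : W.obj d), (W.po d).le x y → app d x ≤ app d y
  naturality : ∀ {d d' : D} (f : d ⟶ d') (x : W.obj d),
    app d x ≫ F.toFunctor.map f = app d' (W.map f x)

/-- The image of a cylinder under a `Pos`-enriched functor. -/
def Cylinder.mapF {D : Type u''} {C : Type u} {E : Type u'}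
    [Category.{v''} D] [Category.{v} C] [Category.{v'} E]
    [PosEnriched D] [PosEnriched C] [PosEnriched E]
    {W : PosWeight D} {G : PosFunctor D C} {L : C}
    (F : PosFunctor C E) (c : Cylinder W G L) :
    Cylinder W (G.comp F) (F.toFunctor.obj L) where
  app d x := F.toFunctor.map (c.app d x)
  monotone d x y h := F.map_le (c.monotone d x y h)
  naturality f x := by
    show F.toFunctor.map _ ≫ F.toFunctor.map _ = _
    rw [← F.toFunctor.map_comp, c.naturality]

/-- `L` with cylinder `c` is a weak `W`-weighted limit of `F`:
the induced comparison maps on hom-posets are surjective. -/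
def IsWeakWeightedLimitP {D : Type u'} [Category.{v'} D] [PosEnriched D] (W : PosWeight D)
    {E : Type u} [Category.{v} E] [PosEnriched E] (F : PosFunctor D E)
    (L : E) (c : Cylinder W F L) : Prop :=
  ∀ (Z : E) (φ : Cylinder W F Z), ∃ h : Z ⟶ L, ∀ (d : D) (x : W.obj d),
    h ≫ c.app d x = φ.app d x

/-- `L` with cylinder `c` is a (strong) `W`-weighted limit of `F`. -/
def IsWeightedLimitP {D : Type u'} [Category.{v'} D] [PosEnriched D] (W : PosWeight D)
    {E : Type u} [Category.{v} E] [PosEnriched E] (F : PosFunctor D E)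
    (L : E) (c : Cylinder W F L) : Prop :=
  IsWeakWeightedLimitP W F L c ∧
  ∀ (Z : E) (h h' : Z ⟶ L), (∀ (d : D) (x : W.obj d), h ≫ c.app d x ≤ h' ≫ c.app d x) → h ≤ h'

/-- A weakly lex `Pos`-category: all weak finite weighted limits exist. -/
def WeaklyLex (C : Type u) [Category.{v} C] [PosEnriched C] : Prop :=
  ∀ (D : Type) [SmallCategory D] [PosEnriched D] (W : PosWeight D) (F : PosFunctor D C),
    W.IsFiniteWeight → ∃ (L : C) (c : Cylinder W F L), IsWeakWeightedLimitP W F L c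

/-- All finite weighted limits exist (in the strong sense). -/
def HasFiniteWeightedLimitsP (C : Type u) [Category.{v} C] [PosEnriched C] : Prop :=
  ∀ (D : Type) [SmallCategory D] [PosEnriched D] (W : PosWeight D) (F : PosFunctor D C),
    W.IsFiniteWeight → ∃ (L : C) (c : Cylinder W F L), IsWeightedLimitP W F L c

open PosEnr

/-- A regular `Pos`-enriched category. -/
def IsRegularCat (C : Type u) [Category.{v} C] [PosEnriched C] : Prop :=
  HasFiniteWeightedLimitsP C ∧
  (∀ {X Y : C} (f : X ⟶ Y), ∃ (I : C) (e : X ⟶ I) (m : I ⟶ Y),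
      IsSo e ∧ OrderMono m ∧ e ≫ m = f) ∧
  (∀ {X Y Z P : C} (f : X ⟶ Z) (g : Y ⟶ Z) (p0 : P ⟶ X) (p1 : P ⟶ Y),
      IsPullbackP f g p0 p1 → IsSo f → IsSo p1)

/-- An exact `Pos`-enriched category: regular, and every congruence is effective,
i.e. is the kernel congruence (comma object `q/q`) of some morphism. -/
def IsExactCat (C : Type u) [Category.{v} C] [PosEnriched C] : Prop :=
  IsRegularCat C ∧
  ∀ {S X : C} (s0 s1 : S ⟶ X), IsCongPair s0 s1 →
    ∃ (Q : C) (q : X ⟶ Q), IsCommaP q q s0 s1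

/-- Fully order-faithful: full and order-reflecting (hence faithful) on hom-posets. -/
def FullyOrderFaithful {C : Type u} {E : Type u'} [Category.{v} C] [Category.{v'} E]
    [PosEnriched C] [PosEnriched E] (F : PosFunctor C E) : Prop :=
  (∀ {X Y : C} (g : F.toFunctor.obj X ⟶ F.toFunctor.obj Y), ∃ f : X ⟶ Y, F.toFunctor.map f = g) ∧
  (∀ {X Y : C} (f g : X ⟶ Y), F.toFunctor.map f ≤ F.toFunctor.map g → f ≤ g)

/-- An equivalence of `Pos`-enriched categories. -/
def IsEquivP {C : Type u} {E : Type u'} [Category.{v} C] [Category.{v'} E]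
    [PosEnriched C] [PosEnriched E] (F : PosFunctor C E) : Prop :=
  FullyOrderFaithful F ∧ ∀ Y : E, ∃ X : C, Nonempty (F.toFunctor.obj X ≅ Y)

/-- Preservation of all finite weighted limits by a `Pos`-enriched functor. -/
def PreservesFiniteWeightedLimitsP {C : Type u} {E : Type u'} [Category.{v} C] [Category.{v'} E]
    [PosEnriched C] [PosEnriched E] (F : PosFunctor C E) : Prop :=
  ∀ (D : Type) [SmallCategory D] [PosEnriched D] (W : PosWeight D), W.IsFiniteWeight →
    ∀ (G : PosFunctor D C) (L : C) (c : Cylinder W G L),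
      IsWeightedLimitP W G L c →
      IsWeightedLimitP W (G.comp F) (F.toFunctor.obj L) (c.mapF F)

/-- A regular `Pos`-enriched functor: preserves finite weighted limits and effective
epimorphisms. -/
def IsRegularFunctor {C : Type u} {E : Type u'} [Category.{v} C] [Category.{v'} E]
    [PosEnriched C] [PosEnriched E] (F : PosFunctor C E) : Prop :=
  PreservesFiniteWeightedLimitsP F ∧
  ∀ {X Y : C} (e : X ⟶ Y), EffectiveEpiP e → EffectiveEpiP (F.toFunctor.map e)

/-- A left covering functor: for every weak finite weighted limit in the domain, any
comparison morphism into the corresponding (strong) limit in the codomain is an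
effective epimorphism. -/
def LeftCovering {C : Type u} {E : Type u'} [Category.{v} C] [Category.{v'} E]
    [PosEnriched C] [PosEnriched E] (F : PosFunctor C E) : Prop :=
  ∀ (D : Type) [SmallCategory D] [PosEnriched D] (W : PosWeight D), W.IsFiniteWeight →
    ∀ (G : PosFunctor D C) (L : C) (c : Cylinder W G L), IsWeakWeightedLimitP W G L c →
    ∀ (L' : E) (c' : Cylinder W (G.comp F) L'), IsWeightedLimitP W (G.comp F) L' c' →
    ∀ h : F.toFunctor.obj L ⟶ L', (∀ (d : D) (x : W.obj d),
        h ≫ c'.app d x = F.toFunctor.map (c.app d x)) →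
      EffectiveEpiP h

/-- The full subcategory of a `Pos`-enriched category is `Pos`-enriched. -/
instance fullSubPosEnriched {C : Type u} [Category.{v} C] [PosEnriched C] (Z : C → Prop) :
    PosEnriched (ObjectProperty.FullSubcategory Z) where
  homOrder X Y := @PartialOrder.lift _ _ (PosEnriched.homOrder X.obj Y.obj)
    (fun f => f.hom) (fun _ _ h => ObjectProperty.hom_ext _ h)
  comp_mono h h' := PosEnriched.comp_mono h h'

/-! ## The exact completion -/

open PosEnr

/-- A pseudocongruence in a `Pos`-enriched category: an order-reflexive and transitive
parallel pair. These are the objects of the exact completion. -/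
structure ExObj (C : Type u) [Category.{v} C] [PosEnriched C] where
  X : C
  R : C
  r0 : R ⟶ X
  r1 : R ⟶ X
  orefl : ∀ {A : C} (a0 a1 : A ⟶ X), a0 ≤ a1 → ∃ u : A ⟶ R, u ≫ r0 = a0 ∧ u ≫ r1 = a1
  tra : ∀ {A : C} (u v : A ⟶ R), u ≫ r1 = v ≫ r0 →
    ∃ t : A ⟶ R, t ≫ r0 = u ≫ r0 ∧ t ≫ r1 = v ≫ r1

namespace ExObj

variable {C : Type u} [Category.{v} C] [PosEnriched C]

/-- `f : X ⟶ Y` is compatible from `(X,R)` to `(Y,S)`. -/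
def Compat (A B : ExObj C) (f : A.X ⟶ B.X) : Prop :=
  ∃ fb : A.R ⟶ B.R, fb ≫ B.r0 = A.r0 ≫ f ∧ fb ≫ B.r1 = A.r1 ≫ f

/-- The preorder `f ≼ g` on compatible morphisms, given by factoring `(f,g)` through
the codomain pseudocongruence. -/
def Pre (A B : ExObj C) (f g : A.X ⟶ B.X) : Prop :=
  ∃ s : A.X ⟶ B.R, s ≫ B.r0 = f ∧ s ≫ B.r1 = g

theorem Pre.refl (A B : ExObj C) (f : A.X ⟶ B.X) : Pre A B f f := by
  obtain ⟨u, h0, h1⟩ := B.orefl f f le_rfl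
  exact ⟨u, h0, h1⟩

theorem Pre.trans' {A B : ExObj C} {f g h : A.X ⟶ B.X}
    (h1 : Pre A B f g) (h2 : Pre A B g h) : Pre A B f h := by
  obtain ⟨s, hs0, hs1⟩ := h1
  obtain ⟨t, ht0, ht1⟩ := h2
  obtain ⟨w, hw0, hw1⟩ := B.tra s t (by rw [hs1, ht0])
  exact ⟨w, by rw [hw0, hs0], by rw [hw1, ht1]⟩

theorem Compat.comp {A B D : ExObj C} {f : A.X ⟶ B.X} {g : B.X ⟶ D.X}
    (hf : Compat A B f) (hg : Compat B D g) : Compat A D (f ≫ g) := by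
  obtain ⟨fb, h0, h1⟩ := hf
  obtain ⟨gb, k0, k1⟩ := hg
  refine ⟨fb ≫ gb, ?_, ?_⟩
  · rw [Category.assoc, k0, ← Category.assoc, h0, Category.assoc]
  · rw [Category.assoc, k1, ← Category.assoc, h1, Category.assoc]

theorem Pre.comp_left {A B D : ExObj C} {f f' : A.X ⟶ B.X} (g : B.X ⟶ D.X)
    (hg : Compat B D g) (h : Pre A B f f') : Pre A D (f ≫ g) (f' ≫ g) := by
  obtain ⟨s, hs0, hs1⟩ := h
  obtain ⟨gb, k0, k1⟩ := hg
  refine ⟨s ≫ gb, ?_, ?_⟩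
  · rw [Category.assoc, k0, ← Category.assoc, hs0]
  · rw [Category.assoc, k1, ← Category.assoc, hs1]

theorem Pre.comp_right {A B D : ExObj C} (f : A.X ⟶ B.X) {g g' : B.X ⟶ D.X}
    (h : Pre B D g g') : Pre A D (f ≫ g) (f ≫ g') := by
  obtain ⟨s, hs0, hs1⟩ := h
  exact ⟨f ≫ s, by rw [Category.assoc, hs0], by rw [Category.assoc, hs1]⟩

theorem Pre.compCongr {A B D : ExObj C} {f f' : A.X ⟶ B.X} {g g' : B.X ⟶ D.X}
    (hg : Compat B D g) (h1 : Pre A B f f') (h2 : Pre B D g g') :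
    Pre A D (f ≫ g) (f' ≫ g') :=
  (Pre.comp_left g hg h1).trans' (Pre.comp_right f' h2)

/-- The equivalence relation on compatible morphisms. -/
def exSetoid (A B : ExObj C) : Setoid {f : A.X ⟶ B.X // Compat A B f} where
  r f g := Pre A B f.1 g.1 ∧ Pre A B g.1 f.1
  iseqv := ⟨fun f => ⟨Pre.refl A B f.1, Pre.refl A B f.1⟩, fun h => ⟨h.2, h.1⟩,
    fun h1 h2 => ⟨h1.1.trans' h2.1, h2.2.trans' h1.2⟩⟩

/-- The exact completion `C_ex` as a category: objects are pseudocongruences, morphisms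
are equivalence classes of compatible morphisms. -/
instance exCategory : Category (ExObj C) where
  Hom A B := Quotient (exSetoid A B)
  id A := Quotient.mk _ ⟨𝟙 A.X, ⟨𝟙 A.R, by simp, by simp⟩⟩
  comp {A B D} f g :=
    Quotient.liftOn₂ f g (fun f g => Quotient.mk _ ⟨f.1 ≫ g.1, f.2.comp g.2⟩)
      (fun a b a' b' ha hb => Quotient.sound
        ⟨Pre.compCongr b.2 ha.1 hb.1, Pre.compCongr b'.2 ha.2 hb.2⟩)
  id_comp {A B} f := Quotient.inductionOn f fun f => Quotient.sound (by
    constructor <;> · simp only [Category.id_comp]; exact Pre.refl A B f.1)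
  comp_id {A B} f := Quotient.inductionOn f fun f => Quotient.sound (by
    constructor <;> · simp only [Category.comp_id]; exact Pre.refl A B f.1)
  assoc {A B D E} f g h := Quotient.inductionOn₃ f g h fun f g h => Quotient.sound (by
    constructor <;> · simp only [Category.assoc]; exact Pre.refl A E _)

/-- The `Pos`-enrichment of the exact completion. -/
instance exPosEnriched : PosEnriched (ExObj C) where
  homOrder A B :=
    { le := fun f g => Quotient.liftOn₂ f g (fun f g => Pre A B f.1 g.1)
        (fun a b a' b' ha hb => propext
          ⟨fun h => (ha.2.trans' h).trans' hb.1, fun h => (ha.1.trans' h).trans' hb.2⟩)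
      le_refl := fun f => Quotient.inductionOn f fun f => Pre.refl A B f.1
      le_trans := fun f g h => Quotient.inductionOn₃ f g h
        (fun f g h h1 h2 => Pre.trans' h1 h2)
      le_antisymm := fun f g => Quotient.inductionOn₂ f g
        (fun f g h1 h2 => Quotient.sound ⟨h1, h2⟩) }
  comp_mono {A B D} {f f'} {g g'} h h' := by
    revert h h'
    refine Quotient.inductionOn₂ f f' (fun a a' => Quotient.inductionOn₂ g g'
      (fun b b' h h' => ?_))
    exact Pre.compCongr b.2 h h'

end ExObj

/-! ## The canonical embedding `Γ : C → C_ex` -/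

namespace ExObj

variable {C : Type u} [Category.{v} C] [PosEnriched C]

variable (I : C → C) (i0 i1 : ∀ X : C, I X ⟶ X)

/-- The pseudocongruence `(X, I_X)` associated to a chosen weak comma object `I_X` of
`(1_X, 1_X)`. -/
def commaExObj (hle : ∀ X, i0 X ≤ i1 X)
    (hfac : ∀ (X : C) {A : C} (a0 a1 : A ⟶ X), a0 ≤ a1 →
      ∃ u : A ⟶ I X, u ≫ i0 X = a0 ∧ u ≫ i1 X = a1) (X : C) : ExObj C where
  X := X
  R := I X
  r0 := i0 X
  r1 := i1 X
  orefl a0 a1 h := hfac X a0 a1 h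
  tra u v huv := by
    refine hfac X _ _ ?_
    calc u ≫ i0 X ≤ u ≫ i1 X := PosEnriched.comp_mono le_rfl (hle X)
      _ = v ≫ i0 X := huv
      _ ≤ v ≫ i1 X := PosEnriched.comp_mono le_rfl (hle X)

/-- The canonical functor `Γ : C → C_ex`, `X ↦ (X, I_X)`, `f ↦ [f]`. -/
def GammaFunc (hle : ∀ X, i0 X ≤ i1 X)
    (hfac : ∀ (X : C) {A : C} (a0 a1 : A ⟶ X), a0 ≤ a1 →
      ∃ u : A ⟶ I X, u ≫ i0 X = a0 ∧ u ≫ i1 X = a1) : C ⥤ ExObj C where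
  obj X := commaExObj I i0 i1 hle hfac X
  map {X Y} f := Quotient.mk _ ⟨f, by
    obtain ⟨u, h0, h1⟩ := hfac Y (i0 X ≫ f) (i1 X ≫ f)
      (PosEnriched.comp_mono (hle X) le_rfl)
    exact ⟨u, h0, h1⟩⟩
  map_id X := Quotient.sound (by
    constructor <;> exact Pre.refl _ _ _)
  map_comp f g := Quotient.sound (by
    constructor <;> exact Pre.refl _ _ _)

/-- The canonical quotient morphism `[1_X] : Γ X → (X, R)` in `C_ex`. -/
def exQuot (hle : ∀ X, i0 X ≤ i1 X)
    (hfac : ∀ (X : C) {A : C} (a0 a1 : A ⟶ X), a0 ≤ a1 →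
      ∃ u : A ⟶ I X, u ≫ i0 X = a0 ∧ u ≫ i1 X = a1) (A : ExObj C) :
    (GammaFunc I i0 i1 hle hfac).obj A.X ⟶ A :=
  Quotient.mk _ ⟨𝟙 A.X, by
    obtain ⟨u, h0, h1⟩ := A.orefl (i0 A.X) (i1 A.X) (hle A.X)
    exact ⟨u, by simpa [GammaFunc, commaExObj] using h0, by simpa [GammaFunc, commaExObj] using h1⟩⟩

end ExObj

namespace ExObj

variable {C : Type u} [Category.{v} C] [PosEnriched C]

def homMk {A B : ExObj C} (f : A.X ⟶ B.X) (hf : Compat A B f) : A ⟶ B :=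
  Quotient.mk _ ⟨f, hf⟩

theorem homMk_congr {A B : ExObj C} {f g : A.X ⟶ B.X} (hf : Compat A B f) (hg : Compat A B g)
    (h : f = g) : homMk f hf = homMk g hg := by
  subst h; rfl

theorem exists_homMk_eq {A B : ExObj C} (φ : A ⟶ B) : ∃ f hf, homMk f hf = φ := by
  obtain ⟨⟨f, hf⟩, rfl⟩ := Quotient.exists_rep φ
  exact ⟨f, hf, rfl⟩

theorem compat_of_r0_le_r1 {A : ExObj C} (hA : A.r0 ≤ A.r1) (B : ExObj C) (f : A.X ⟶ B.X) :
    Compat A B f :=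
  B.orefl _ _ (comp_mono' hA le_rfl)

theorem pre_iff_le (A B : ExObj C) (hB : B.r0 ≤ B.r1) (f g : A.X ⟶ B.X) :
    Pre A B f g ↔ f ≤ g := by
  refine ⟨?_, B.orefl f g⟩
  rintro ⟨s, rfl, rfl⟩
  exact comp_mono' le_rfl hB

section Gamma

variable (I : C → C) (i0 i1 : ∀ X : C, I X ⟶ X) (hle : ∀ X, i0 X ≤ i1 X)
  (hfac : ∀ (X : C) {A : C} (a0 a1 : A ⟶ X), a0 ≤ a1 →
    ∃ u : A ⟶ I X, u ≫ i0 X = a0 ∧ u ≫ i1 X = a1)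

theorem gammaFunc_map_le_iff {X Y : C} (f g : X ⟶ Y) :
    (GammaFunc I i0 i1 hle hfac).map f ≤ (GammaFunc I i0 i1 hle hfac).map g ↔ f ≤ g :=
  pre_iff_le (commaExObj I i0 i1 hle hfac X) (commaExObj I i0 i1 hle hfac Y) (hle Y) f g

theorem gammaFunc_map_surjective {X Y : C}
    (φ : (GammaFunc I i0 i1 hle hfac).obj X ⟶ (GammaFunc I i0 i1 hle hfac).obj Y) :
    ∃ f : X ⟶ Y, (GammaFunc I i0 i1 hle hfac).map f = φ := by
  obtain ⟨f, hf, rfl⟩ := exists_homMk_eq φ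
  exact ⟨f, rfl⟩

theorem gammaFunc_map_injective {X Y : C} {f g : X ⟶ Y}
    (h : (GammaFunc I i0 i1 hle hfac).map f = (GammaFunc I i0 i1 hle hfac).map g) : f = g :=
  le_antisymm ((gammaFunc_map_le_iff I i0 i1 hle hfac f g).1 h.le)
    ((gammaFunc_map_le_iff I i0 i1 hle hfac g f).1 h.ge)

variable (I' : C → C) (i0' i1' : ∀ X : C, I' X ⟶ X) (hle' : ∀ X, i0' X ≤ i1' X)
  (hfac' : ∀ (X : C) {A : C} (a0 a1 : A ⟶ X), a0 ≤ a1 →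
    ∃ u : A ⟶ I' X, u ≫ i0' X = a0 ∧ u ≫ i1' X = a1)

def commaExObjIso (X : C) :
    commaExObj I i0 i1 hle hfac X ≅ commaExObj I' i0' i1' hle' hfac' X where
  -- composition and identities of `C_ex` are computed on representatives, definitionally
  hom := homMk (𝟙 X) (compat_of_r0_le_r1 (hle X) _ _)
  inv := homMk (𝟙 X) (compat_of_r0_le_r1 (hle' X) _ _)
  hom_inv_id := homMk_congr _ _ (Category.comp_id (𝟙 X))
  inv_hom_id := homMk_congr _ _ (Category.comp_id (𝟙 X))

def gammaFuncIso : GammaFunc I i0 i1 hle hfac ≅ GammaFunc I' i0' i1' hle' hfac' :=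
  NatIso.ofComponents (commaExObjIso I i0 i1 hle hfac I' i0' i1' hle' hfac') fun f =>
    homMk_congr _ _ (show f ≫ 𝟙 _ = 𝟙 _ ≫ f by simp)

end Gamma

end ExObj

theorem statement11_general {C : Type u} [Category.{v} C] [PosEnriched C]
    (I : C → C) (i0 i1 : ∀ X : C, I X ⟶ X) (hle : ∀ X, i0 X ≤ i1 X)
    (hfac : ∀ (X : C) {A : C} (a0 a1 : A ⟶ X), a0 ≤ a1 →
      ∃ u : A ⟶ I X, u ≫ i0 X = a0 ∧ u ≫ i1 X = a1) :
    (∀ {X Y : C} (f g : X ⟶ Y), f ≤ g ↔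
      (ExObj.GammaFunc I i0 i1 hle hfac).map f ≤ (ExObj.GammaFunc I i0 i1 hle hfac).map g) ∧
    (∀ {X Y : C} (φ : (ExObj.GammaFunc I i0 i1 hle hfac).obj X ⟶ (ExObj.GammaFunc I i0 i1 hle hfac).obj Y),
      ∃ f : X ⟶ Y, (ExObj.GammaFunc I i0 i1 hle hfac).map f = φ) ∧
    (∀ {X Y : C} (f g : X ⟶ Y),
      (ExObj.GammaFunc I i0 i1 hle hfac).map f = (ExObj.GammaFunc I i0 i1 hle hfac).map g → f = g) ∧
    (∀ (I' : C → C) (i0' i1' : ∀ X : C, I' X ⟶ X) (hle' : ∀ X, i0' X ≤ i1' X)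
      (hfac' : ∀ (X : C) {A : C} (a0 a1 : A ⟶ X), a0 ≤ a1 →
        ∃ u : A ⟶ I' X, u ≫ i0' X = a0 ∧ u ≫ i1' X = a1),
      Nonempty (ExObj.GammaFunc I i0 i1 hle hfac ≅ ExObj.GammaFunc I' i0' i1' hle' hfac')) :=
  ⟨fun f g => (ExObj.gammaFunc_map_le_iff I i0 i1 hle hfac f g).symm,
    ExObj.gammaFunc_map_surjective I i0 i1 hle hfac,
    fun _ _ => ExObj.gammaFunc_map_injective I i0 i1 hle hfac,
    fun I' i0' i1' hle' hfac' => ⟨ExObj.gammaFuncIso I i0 i1 hle hfac I' i0' i1' hle' hfac'⟩⟩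

/-- the canonical functor `Γ : C → C_ex` is a well-defined `Pos`-enriched
functor, fully order-faithful, and independent (up to isomorphism) of the choice of weak
comma objects. -/
theorem statement11 {C : Type u} [Category.{v} C] [PosEnriched C] (hC : WeaklyLex C)
    (I : C → C) (i0 i1 : ∀ X : C, I X ⟶ X) (hle : ∀ X, i0 X ≤ i1 X)
    (hfac : ∀ (X : C) {A : C} (a0 a1 : A ⟶ X), a0 ≤ a1 →
      ∃ u : A ⟶ I X, u ≫ i0 X = a0 ∧ u ≫ i1 X = a1) :
    (∀ {X Y : C} (f g : X ⟶ Y), f ≤ g ↔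
      (ExObj.GammaFunc I i0 i1 hle hfac).map f ≤ (ExObj.GammaFunc I i0 i1 hle hfac).map g) ∧
    (∀ {X Y : C} (φ : (ExObj.GammaFunc I i0 i1 hle hfac).obj X ⟶ (ExObj.GammaFunc I i0 i1 hle hfac).obj Y),
      ∃ f : X ⟶ Y, (ExObj.GammaFunc I i0 i1 hle hfac).map f = φ) ∧
    (∀ {X Y : C} (f g : X ⟶ Y),
      (ExObj.GammaFunc I i0 i1 hle hfac).map f = (ExObj.GammaFunc I i0 i1 hle hfac).map g → f = g) ∧
    (∀ (I' : C → C) (i0' i1' : ∀ X : C, I' X ⟶ X) (hle' : ∀ X, i0' X ≤ i1' X)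
      (hfac' : ∀ (X : C) {A : C} (a0 a1 : A ⟶ X), a0 ≤ a1 →
        ∃ u : A ⟶ I' X, u ≫ i0' X = a0 ∧ u ≫ i1' X = a1),
      Nonempty (ExObj.GammaFunc I i0 i1 hle hfac ≅ ExObj.GammaFunc I' i0' i1' hle' hfac')) :=
  statement11_general I i0 i1 hle hfac
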